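/- arXiv:1410.8327 — 3 statements merged into one kernel-verified Lean document; each statement's English description precedes it below -/
import Mathlib

section
/- Fix real numbers r_x, r_y, r_z with r_x² + r_y² + r_z² ≤ 1. The maximum over s_z ∈ [−1,1] of the function g(s_z) = (1/2)[1 + r_z s_z + √((1 − r_x² − r_y² − r_z²)(1 − s_z²))] equals (1/2)[1 + √(1 − r_x² − r_y²)]. -/
/-- The maximum over s_z ∈ [−1,1] of
g(s_z) = (1/2)[1 + r_z s_z + √((1 − r_x² − r_y² − r_z²)(1 − s_z²))]
equals (1/2)[1 + √(1 − r_x² − r_y²)]. -/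
theorem max_fidelity_incoherent (rx ry rz : ℝ) (h : rx ^ 2 + ry ^ 2 + rz ^ 2 ≤ 1) :
    IsGreatest
      ((fun sz : ℝ => (1 / 2) * (1 + rz * sz +
          Real.sqrt ((1 - rx ^ 2 - ry ^ 2 - rz ^ 2) * (1 - sz ^ 2)))) ''
        Set.Icc (-1 : ℝ) 1)
      ((1 / 2) * (1 + Real.sqrt (1 - rx ^ 2 - ry ^ 2))) := by
  have hA0 : 0 ≤ 1 - rx ^ 2 - ry ^ 2 := by nlinarith [sq_nonneg rz]
  have hrz : rz ^ 2 ≤ 1 - rx ^ 2 - ry ^ 2 := by nlinarith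
  set A := 1 - rx ^ 2 - ry ^ 2 with hA
  constructor
  · -- membership
    by_cases hA' : A = 0
    · have hrz0 : rz = 0 := by nlinarith
      refine ⟨0, by constructor <;> norm_num, ?_⟩
      simp only [hrz0]
      rw [show 1 - rx ^ 2 - ry ^ 2 - (0:ℝ) ^ 2 = A by rw [hA]; ring, hA']
      norm_num
    · have hApos : 0 < A := lt_of_le_of_ne hA0 (Ne.symm hA')
      have hs : 0 < Real.sqrt A := Real.sqrt_pos.mpr hApos
      have hs2 : Real.sqrt A ^ 2 = A := Real.sq_sqrt hA0
      refine ⟨rz / Real.sqrt A, ?_, ?_⟩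
      · constructor
        · rw [le_div_iff₀ hs]
          nlinarith [Real.sqrt_nonneg A, abs_nonneg rz, neg_abs_le rz, sq_abs rz]
        · rw [div_le_one hs]
          nlinarith [neg_abs_le rz, le_abs_self rz, sq_abs rz]
      · simp only
        have key : (1 - rx ^ 2 - ry ^ 2 - rz ^ 2) * (1 - (rz / Real.sqrt A) ^ 2)
            = ((A - rz ^ 2) / Real.sqrt A) ^ 2 := by
          field_simp
          nlinarith [hs2]
        rw [key, Real.sqrt_sq (div_nonneg (by nlinarith : (0:ℝ) ≤ A - rz ^ 2) hs.le)]
        field_simp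
        nlinarith [hs2]
  · -- upper bound
    rintro y ⟨sz, ⟨h1, h2⟩, rfl⟩
    simp only
    have hsz : (0:ℝ) ≤ 1 - sz ^ 2 := by nlinarith
    have hb : 0 ≤ A - rz ^ 2 := by nlinarith
    rw [show 1 - rx ^ 2 - ry ^ 2 - rz ^ 2 = A - rz ^ 2 from by rw [hA],
      Real.sqrt_mul hb]
    set b := Real.sqrt (A - rz ^ 2) with hbdef
    set d := Real.sqrt (1 - sz ^ 2) with hddef
    set s := Real.sqrt A with hsdef
    have hb2 : b ^ 2 = A - rz ^ 2 := Real.sq_sqrt hb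
    have hd2 : d ^ 2 = 1 - sz ^ 2 := Real.sq_sqrt hsz
    have hs2 : s ^ 2 = A := Real.sq_sqrt hA0
    have hbn : 0 ≤ b := Real.sqrt_nonneg _
    have hdn : 0 ≤ d := Real.sqrt_nonneg _
    have hsn : 0 ≤ s := Real.sqrt_nonneg _
    nlinarith [sq_nonneg (rz * d - b * sz), sq_nonneg (rz * sz + b * d - s),
      sq_nonneg (rz * sz + b * d + s), mul_nonneg hbn hdn]
end

section
/- For a qubit state ρ with Bloch vector (r_x, r_y, r_z), the fidelity-based coherence C_F(ρ) = 1 − √(max over incoherent δ of F(ρ,δ)) equals 1 − (√2/2)·√(1 + √(1 − r_x² − r_y²)). -/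
open Matrix Complex ComplexOrder

noncomputable def matSqrt {n : Type*} [Fintype n] [DecidableEq n]
    (A : Matrix n n ℂ) : Matrix n n ℂ :=
  open Classical in
  if h : A.PosSemidef then (h.1.eigenvectorUnitary : Matrix n n ℂ) *
    diagonal ((↑) ∘ Real.sqrt ∘ h.1.eigenvalues) * (star h.1.eigenvectorUnitary : Matrix n n ℂ)
  else 0

noncomputable def fid {n : Type*} [Fintype n] [DecidableEq n]
    (ρ δ : Matrix n n ℂ) : ℝ :=
  ((matSqrt (matSqrt ρ * δ * matSqrt ρ)).trace).re ^ 2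

noncomputable def traceNorm {n : Type*} [Fintype n] [DecidableEq n]
    (A : Matrix n n ℂ) : ℝ :=
  ((matSqrt (Aᴴ * A)).trace).re

def IsDensity {n : Type*} [Fintype n] [DecidableEq n] (ρ : Matrix n n ℂ) : Prop :=
  ρ.PosSemidef ∧ ρ.trace = 1

noncomputable def qubit (rx ry rz : ℝ) : Matrix (Fin 2) (Fin 2) ℂ :=
  (1/2 : ℂ) • !![(1:ℂ) + rz, (rx : ℂ) - ry * I; (rx : ℂ) + ry * I, (1:ℂ) - rz]

section Aux

set_option linter.unnecessarySeqFocus false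
set_option linter.unusedTactic false

noncomputable def Matrix.PosSemidef.sqrt {n : Type*} [Fintype n] [DecidableEq n]
    {A : Matrix n n ℂ} (h : A.PosSemidef) : Matrix n n ℂ :=
  (h.1.eigenvectorUnitary : Matrix n n ℂ) *
    diagonal ((↑) ∘ Real.sqrt ∘ h.1.eigenvalues) * (star h.1.eigenvectorUnitary : Matrix n n ℂ)

lemma Matrix.PosSemidef.posSemidef_sqrt {n : Type*} [Fintype n] [DecidableEq n]
    {A : Matrix n n ℂ} (h : A.PosSemidef) : h.sqrt.PosSemidef := by
  unfold Matrix.PosSemidef.sqrt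
  have hD : (diagonal ((↑) ∘ Real.sqrt ∘ h.1.eigenvalues) : Matrix n n ℂ).PosSemidef := by
    apply Matrix.PosSemidef.diagonal
    intro i
    exact Complex.zero_le_real.mpr (Real.sqrt_nonneg _)
  have := hD.mul_mul_conjTranspose_same (h.1.eigenvectorUnitary : Matrix n n ℂ)
  exact this

lemma Matrix.PosSemidef.sqrt_mul_self {n : Type*} [Fintype n] [DecidableEq n]
    {A : Matrix n n ℂ} (h : A.PosSemidef) : h.sqrt * h.sqrt = A := by
  unfold Matrix.PosSemidef.sqrt
  set U : Matrix n n ℂ := (h.1.eigenvectorUnitary : Matrix n n ℂ)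
  have hU : (star h.1.eigenvectorUnitary : Matrix n n ℂ) * U = 1 := Unitary.coe_star_mul_self _
  have hdd : (diagonal ((↑) ∘ Real.sqrt ∘ h.1.eigenvalues) : Matrix n n ℂ) *
      diagonal ((↑) ∘ Real.sqrt ∘ h.1.eigenvalues) = diagonal (RCLike.ofReal ∘ h.1.eigenvalues) := by
    rw [diagonal_mul_diagonal]
    congr 1
    funext i
    simp only [Function.comp_apply]
    rw [← Complex.ofReal_mul, Real.mul_self_sqrt (h.eigenvalues_nonneg i)]
    rfl
  conv_rhs => rw [h.1.spectral_theorem]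
  rw [Unitary.conjStarAlgAut_apply]
  calc U * diagonal ((↑) ∘ Real.sqrt ∘ h.1.eigenvalues) * (star h.1.eigenvectorUnitary : Matrix n n ℂ) *
        (U * diagonal ((↑) ∘ Real.sqrt ∘ h.1.eigenvalues) * (star h.1.eigenvectorUnitary : Matrix n n ℂ))
      = U * (diagonal ((↑) ∘ Real.sqrt ∘ h.1.eigenvalues) *
        ((star h.1.eigenvectorUnitary : Matrix n n ℂ) * U) *
        diagonal ((↑) ∘ Real.sqrt ∘ h.1.eigenvalues)) * (star h.1.eigenvectorUnitary : Matrix n n ℂ) := by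
        simp only [Matrix.mul_assoc]
    _ = _ := by rw [hU, Matrix.mul_one, hdd]

lemma aux_diag_nn {n : Type*} [Fintype n] [DecidableEq n] {M : Matrix n n ℂ}
    (hM : M.PosSemidef) (i : n) : 0 ≤ M i i := by
  exact hM.diag_nonneg

lemma aux_det_nn {n : Type*} [Fintype n] [DecidableEq n] {M : Matrix n n ℂ}
    (hM : M.PosSemidef) : 0 ≤ M.det := by
  rw [hM.isHermitian.det_eq_prod_eigenvalues]
  exact Finset.prod_nonneg fun i _ => Complex.zero_le_real.mpr (hM.eigenvalues_nonneg i)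

lemma aux_trace_nn {M : Matrix (Fin 2) (Fin 2) ℂ} (hM : M.PosSemidef) : 0 ≤ M.trace := by
  rw [Matrix.trace_fin_two]
  exact add_nonneg (aux_diag_nn hM 0) (aux_diag_nn hM 1)

lemma matSqrt_of_psd {n : Type*} [Fintype n] [DecidableEq n] {M : Matrix n n ℂ}
    (hM : M.PosSemidef) : matSqrt M = hM.sqrt := dif_pos hM

lemma aux_sqrtTrace {M : Matrix (Fin 2) (Fin 2) ℂ} (hM : M.PosSemidef) :
    ((matSqrt M).trace).re = Real.sqrt (M.trace.re + 2 * Real.sqrt (M.det.re)) := by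
  rw [matSqrt_of_psd hM]
  set B := hM.sqrt with hBdef
  have hB : B.PosSemidef := hM.posSemidef_sqrt
  have hB2 : B * B = M := hM.sqrt_mul_self
  have htB : 0 ≤ B.trace := aux_trace_nn hB
  have hdB : 0 ≤ B.det := aux_det_nn hB
  have key : B.trace ^ 2 = M.trace + 2 * B.det := by
    rw [← hB2]
    simp [Matrix.trace_fin_two, Matrix.det_fin_two, Matrix.mul_apply, Fin.sum_univ_two]
    ring
  have hdet2 : B.det ^ 2 = M.det := by
    rw [← hB2, Matrix.det_mul]; ring
  obtain ⟨htBre, htBim⟩ := Complex.nonneg_iff.mp htB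
  obtain ⟨hdBre, hdBim⟩ := Complex.nonneg_iff.mp hdB
  have hdre : B.det.re ^ 2 = M.det.re := by
    have := congrArg Complex.re hdet2
    simpa [pow_two, Complex.mul_re, ← hdBim] using this
  have hBdet_eq : B.det.re = Real.sqrt (M.det.re) := by
    rw [← hdre, Real.sqrt_sq hdBre]
  have keyre : B.trace.re ^ 2 = M.trace.re + 2 * Real.sqrt (M.det.re) := by
    have := congrArg Complex.re key
    simpa [pow_two, Complex.mul_re, ← htBim, hBdet_eq] using this
  rw [← keyre, Real.sqrt_sq htBre]

lemma aux_fid_formula {ρ δ : Matrix (Fin 2) (Fin 2) ℂ} (hρ : ρ.PosSemidef) (hδ : δ.PosSemidef) :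
    fid ρ δ = (ρ * δ).trace.re + 2 * Real.sqrt (ρ.det.re * δ.det.re) := by
  unfold fid
  rw [matSqrt_of_psd hρ]
  set A := hρ.sqrt with hAdef
  have hA : A.PosSemidef := hρ.posSemidef_sqrt
  have hA2 : A * A = ρ := hρ.sqrt_mul_self
  have hAH : Aᴴ = A := hA.isHermitian
  have hM : (A * δ * A).PosSemidef := by
    have := hδ.conjTranspose_mul_mul_same A
    rwa [hAH] at this
  rw [aux_sqrtTrace hM]
  have htr : (A * δ * A).trace = (ρ * δ).trace := by
    rw [Matrix.trace_mul_cycle, Matrix.mul_assoc, ← Matrix.mul_assoc, hA2]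
  have hdet : (A * δ * A).det = ρ.det * δ.det := by
    rw [Matrix.det_mul, Matrix.det_mul]
    have : A.det * A.det = ρ.det := by rw [← Matrix.det_mul, hA2]
    rw [← this]; ring
  have hdd : ((ρ.det) * (δ.det)).re = ρ.det.re * δ.det.re := by
    obtain ⟨h1, h2⟩ := Complex.nonneg_iff.mp (aux_det_nn hρ)
    rw [Complex.mul_re, ← h2]; ring
  have htrnn : 0 ≤ (ρ * δ).trace.re := by
    rw [← htr]; exact (Complex.nonneg_iff.mp (aux_trace_nn hM)).1
  rw [Real.sq_sqrt]
  · rw [htr, hdet, hdd]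
  · rw [htr, hdet, hdd]
    positivity

lemma qubit_psd (rx ry rz : ℝ) (h : rx ^ 2 + ry ^ 2 + rz ^ 2 ≤ 1) :
    (qubit rx ry rz).PosSemidef := by
  refine Matrix.PosSemidef.of_dotProduct_mulVec_nonneg ?_ ?_
  · unfold Matrix.IsHermitian
    ext i j
    fin_cases i <;> fin_cases j <;>
      simp [qubit, Matrix.conjTranspose_apply] <;> ring
  · intro x
    set a := x 0
    set b := x 1
    have hexp : dotProduct (star x) ((qubit rx ry rz) *ᵥ x) =
        (1/2 : ℂ) * ((starRingEnd ℂ a) * (((1:ℂ) + rz) * a + ((rx : ℂ) - ry * I) * b)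
          + (starRingEnd ℂ b) * (((rx : ℂ) + ry * I) * a + ((1:ℂ) - rz) * b)) := by
      simp [qubit, dotProduct, mulVec, Fin.sum_univ_two]
      ring
    rw [hexp, Complex.nonneg_iff]
    constructor
    · simp [Complex.mul_re, Complex.add_re, Complex.add_im, Complex.mul_im]
      set p := a.re; set q := a.im; set r := b.re; set s := b.im
      have hrz1 : 0 ≤ 1+rz := by nlinarith [sq_nonneg (1+rz)]
      have hrz2 : 0 ≤ 1-rz := by nlinarith [sq_nonneg (1-rz)]
      have hS : 0 ≤ (1+rz)*(p^2+q^2) + (1-rz)*(r^2+s^2) :=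
        add_nonneg (mul_nonneg hrz1 (add_nonneg (sq_nonneg p) (sq_nonneg q)))
          (mul_nonneg hrz2 (add_nonneg (sq_nonneg r) (sq_nonneg s)))
      nlinarith [sq_nonneg (rx*(p*s - q*r) - ry*(p*r + q*s)),
        sq_nonneg ((1+rz)*(p^2+q^2) - (1-rz)*(r^2+s^2)),
        mul_nonneg (mul_nonneg (sub_nonneg.mpr h) (add_nonneg (sq_nonneg p) (sq_nonneg q)))
          (add_nonneg (sq_nonneg r) (sq_nonneg s)),
        hS, sq_nonneg (p*r+q*s), sq_nonneg (p*s-q*r)]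
    · simp [Complex.mul_re, Complex.add_re, Complex.add_im, Complex.mul_im]
      ring

lemma qubit_det (rx ry rz : ℝ) :
    (qubit rx ry rz).det = ((1 - rx^2 - ry^2 - rz^2)/4 : ℝ) := by
  simp [qubit, Matrix.det_fin_two]
  push_cast
  ring_nf
  simp [Complex.ext_iff]; ring_nf
  exact ⟨trivial, trivial⟩

lemma qubit_diag_trace (rx ry rz d0 d1 : ℝ) :
    ((qubit rx ry rz) * (Matrix.diagonal ![(d0:ℂ), (d1:ℂ)])).trace.re
      = ((1+rz)*d0 + (1-rz)*d1)/2 := by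
  rw [Matrix.trace_fin_two]
  simp only [Matrix.mul_diagonal]
  simp [qubit]
  ring

lemma fid_qubit (rx ry rz : ℝ) (h : rx ^ 2 + ry ^ 2 + rz ^ 2 ≤ 1)
    (d0 d1 : ℝ) (hd0 : 0 ≤ d0) (hd1 : 0 ≤ d1) :
    fid (qubit rx ry rz) (Matrix.diagonal ![(d0:ℂ), (d1:ℂ)]) =
      ((1+rz)*d0 + (1-rz)*d1)/2 + Real.sqrt ((1 - rx^2 - ry^2 - rz^2) * (d0*d1)) := by
  have hb2 : 0 ≤ 1 - rx^2 - ry^2 - rz^2 := by linarith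
  have hδ : (Matrix.diagonal ![(d0:ℂ), (d1:ℂ)]).PosSemidef := by
    apply Matrix.PosSemidef.diagonal
    intro i
    fin_cases i <;> exact Complex.zero_le_real.mpr (by assumption)
  rw [aux_fid_formula (qubit_psd rx ry rz h) hδ, qubit_diag_trace, qubit_det]
  have hdetδ : (Matrix.diagonal ![(d0:ℂ), (d1:ℂ)]).det = ((d0*d1 : ℝ) : ℂ) := by
    simp [Matrix.det_fin_two, Matrix.diagonal]
  rw [hdetδ]
  simp only [Complex.ofReal_re]
  rw [show (1 - rx^2 - ry^2 - rz^2)/4 * (d0*d1)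
      = ((1 - rx^2 - ry^2 - rz^2) * (d0*d1)) * (1/2)^2 by ring,
    Real.sqrt_mul (by positivity), Real.sqrt_sq (by norm_num)]
  ring

lemma density_diag (d0 d1 : ℝ) (h0 : 0 ≤ d0) (h1 : 0 ≤ d1) (hs : d0 + d1 = 1) :
    IsDensity (Matrix.diagonal ![(d0:ℂ),(d1:ℂ)]) ∧
      (Matrix.diagonal ![(d0:ℂ),(d1:ℂ)]).IsDiag := by
  refine ⟨⟨Matrix.PosSemidef.diagonal ?_, ?_⟩, Matrix.isDiag_diagonal _⟩
  · intro i
    fin_cases i <;> exact Complex.zero_le_real.mpr (by assumption)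
  · rw [Matrix.trace_diagonal]
    rw [Fin.sum_univ_two]
    simp only [Matrix.cons_val_zero, Matrix.cons_val_one, Matrix.head_cons]
    exact_mod_cast congrArg (Complex.ofReal) hs

end Aux

set_option maxHeartbeats 1000000 in
/-- For a qubit state with Bloch vector (rx, ry, rz), the fidelity-based coherence
C_F(ρ) = 1 − √(max over incoherent δ of F(ρ,δ)) equals
1 − (√2/2)·√(1 + √(1 − rx² − ry²)). -/
theorem fidelity_coherence_qubit (rx ry rz : ℝ) (h : rx ^ 2 + ry ^ 2 + rz ^ 2 ≤ 1) :
    1 - Real.sqrt (sSup {F : ℝ | ∃ δ : Matrix (Fin 2) (Fin 2) ℂ,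
        IsDensity δ ∧ δ.IsDiag ∧ F = fid (qubit rx ry rz) δ}) =
      1 - (Real.sqrt 2 / 2) * Real.sqrt (1 + Real.sqrt (1 - rx ^ 2 - ry ^ 2)) := by
  set t := Real.sqrt (1 - rx ^ 2 - ry ^ 2) with ht
  have hxy : 0 ≤ 1 - rx^2 - ry^2 := by nlinarith [sq_nonneg rz]
  have hb2 : 0 ≤ 1 - rx^2 - ry^2 - rz^2 := by linarith
  have ht0 : 0 ≤ t := Real.sqrt_nonneg _
  have ht2 : t^2 = rz^2 + (1 - rx^2 - ry^2 - rz^2) := by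
    rw [ht, Real.sq_sqrt hxy]; ring
  set e := Real.sqrt (1 - rx^2 - ry^2 - rz^2) with he
  have he0 : 0 ≤ e := Real.sqrt_nonneg _
  have he2 : e^2 = 1 - rx^2 - ry^2 - rz^2 := Real.sq_sqrt hb2
  have ht2e : t^2 = rz^2 + e^2 := by rw [he2]; exact ht2
  have hgreat : IsGreatest {F : ℝ | ∃ δ : Matrix (Fin 2) (Fin 2) ℂ,
      IsDensity δ ∧ δ.IsDiag ∧ F = fid (qubit rx ry rz) δ} ((1+t)/2) := by
    constructor
    · -- membership
      by_cases htz : t = 0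
      · have hrz : rz = 0 := by nlinarith
        have hb20 : 1 - rx^2 - ry^2 - rz^2 = 0 := by nlinarith
        refine ⟨Matrix.diagonal ![((1/2 : ℝ):ℂ), ((1/2 : ℝ):ℂ)],
          (density_diag _ _ (by norm_num) (by norm_num) (by norm_num)).1,
          (density_diag _ _ (by norm_num) (by norm_num) (by norm_num)).2, ?_⟩
        rw [fid_qubit rx ry rz h _ _ (by norm_num) (by norm_num), hb20, hrz, htz]
        norm_num
      · have htpos : 0 < t := lt_of_le_of_ne ht0 (Ne.symm htz)
        have hrzt : rz^2 ≤ t^2 := by nlinarith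
        have habs : |rz| ≤ t := by
          have := Real.sqrt_le_sqrt hrzt
          rwa [Real.sqrt_sq_eq_abs, Real.sqrt_sq ht0] at this
        set d0 : ℝ := (1 + rz/t)/2 with hd0def
        set d1 : ℝ := (1 - rz/t)/2 with hd1def
        have hrle : -t ≤ rz ∧ rz ≤ t := abs_le.mp habs
        have hd0 : 0 ≤ d0 := by
          rw [hd0def]
          have : -1 ≤ rz/t := by
            rw [neg_le, ← neg_div]; exact (div_le_one htpos).mpr (by linarith [hrle.1])
          linarith
        have hd1 : 0 ≤ d1 := by
          rw [hd1def]
          have : rz/t ≤ 1 := (div_le_one htpos).mpr hrle.2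
          linarith
        have hsum : d0 + d1 = 1 := by rw [hd0def, hd1def]; ring
        refine ⟨Matrix.diagonal ![(d0:ℂ), (d1:ℂ)],
          (density_diag _ _ hd0 hd1 hsum).1, (density_diag _ _ hd0 hd1 hsum).2, ?_⟩
        rw [fid_qubit rx ry rz h _ _ hd0 hd1]
        have hkey : (1 - rx^2 - ry^2 - rz^2) * (d0*d1) = ((1 - rx^2 - ry^2 - rz^2)/(2*t))^2 := by
          rw [hd0def, hd1def]
          field_simp
          linear_combination (1 - rx^2 - ry^2 - rz^2) * ht2
        rw [hkey, Real.sqrt_sq (by positivity)]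
        rw [hd0def, hd1def]
        field_simp
        linear_combination 2 * ht2
    · -- upper bound
      rintro F ⟨δ, ⟨hpsd, htr⟩, hdiag, rfl⟩
      set d0 : ℝ := (δ 0 0).re with hd0def
      set d1 : ℝ := (δ 1 1).re with hd1def
      obtain ⟨hd0, hd0im⟩ := Complex.nonneg_iff.mp (aux_diag_nn hpsd 0)
      obtain ⟨hd1, hd1im⟩ := Complex.nonneg_iff.mp (aux_diag_nn hpsd 1)
      have hδeq : δ = Matrix.diagonal ![(d0:ℂ), (d1:ℂ)] := by
        ext i j
        fin_cases i <;> fin_cases j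
        · simp [Matrix.diagonal, Complex.ext_iff, hd0def, ← hd0im]
        · simpa [Matrix.diagonal] using hdiag (by decide : (0 : Fin 2) ≠ 1)
        · simpa [Matrix.diagonal] using hdiag (by decide : (1 : Fin 2) ≠ 0)
        · simp [Matrix.diagonal, Complex.ext_iff, hd1def, ← hd1im]
      have hsum : d0 + d1 = 1 := by
        have := congrArg Complex.re htr
        simpa [Matrix.trace_fin_two, hd0def, hd1def] using this
      rw [hδeq, fid_qubit rx ry rz h d0 d1 hd0 hd1]
      set g := Real.sqrt (d0*d1) with hg
      have hg0 : 0 ≤ g := Real.sqrt_nonneg _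
      have hg2 : g^2 = d0*d1 := Real.sq_sqrt (mul_nonneg hd0 hd1)
      have hcge : Real.sqrt ((1 - rx^2 - ry^2 - rz^2) * (d0*d1)) = e * g := by
        rw [he, hg, ← Real.sqrt_mul hb2]
      rw [hcge]
      have hug : (d0-d1)^2 + 4*g^2 = 1 := by
        rw [hg2]; nlinarith [hsum]
      have key : t^2 - (rz*(d0-d1)+2*e*g)^2 = (2*rz*g - e*(d0-d1))^2 := by
        linear_combination ht2e - (rz^2+e^2)*hug
      have hX : rz*(d0-d1) + 2*e*g ≤ t := by
        nlinarith [key, sq_nonneg (2*rz*g - e*(d0-d1)), ht0]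
      linarith
  rw [hgreat.csSup_eq]
  have hfin : Real.sqrt ((1+t)/2) = (Real.sqrt 2 / 2) * Real.sqrt (1 + t) := by
    rw [show (1+t)/2 = ((Real.sqrt 2 / 2) * Real.sqrt (1+t))^2 by
      rw [mul_pow, div_pow, Real.sq_sqrt (by norm_num : (0:ℝ) ≤ 2),
        Real.sq_sqrt (by linarith)]; ring]
    exact Real.sqrt_sq (by positivity)
  rw [hfin]
end

section
/- Let ρ_Z be a 3×3 qutrit density matrix whose only nonzero off-diagonal entries are a_{23} in position (2,3) and its conjugate in position (3,2). Then the trace-norm coherence C_tr(ρ_Z) = min over diagonal density matrices δ of ‖ρ_Z − δ‖_tr equals 2|a_{23}|, with the minimum achieved at the diagonal part of ρ_Z. -/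
open Matrix Complex ComplexOrder

lemma matSqrt_of_sq {n : Type*} [Fintype n] [DecidableEq n]
    {B S : Matrix n n ℂ} (hS : S.PosSemidef) (h : S ^ 2 = B) : matSqrt B = S := by
  have hB : B.PosSemidef := h ▸ hS.pow 2
  have h1 : matSqrt B = cfc Real.sqrt B := by
    rw [matSqrt, dif_pos hB, hB.1.cfc_eq, IsHermitian.cfc, Unitary.conjStarAlgAut_apply]; rfl
  open MatrixOrder in have h2 : CFC.sqrt B = cfc Real.sqrt B := (by
    rw [CFC.sqrt_eq_cfc, cfc_nnreal_eq_real _ B hB.nonneg]; congr 1; funext x; rw [Real.sqrt])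
  open MatrixOrder in rw [h1, ← h2]
  open MatrixOrder in exact CFC.sqrt_unique (by rw [← sq]; exact h) hS.nonneg

lemma psd_diag_nonneg {n : Type*} [Fintype n] [DecidableEq n]
    {M : Matrix n n ℂ} (h : M.PosSemidef) (i : n) : 0 ≤ M i i := by
  exact h.diag_nonneg

-- real quadratic form nonnegativity
lemma quad_nonneg (u v wr wi a b c d : ℝ) (hu : 0 ≤ u) (hv : 0 ≤ v)
    (h : wr^2 + wi^2 ≤ u*v) :
    0 ≤ u*(a^2+b^2) + v*(c^2+d^2) + 2*(a*(wr*c - wi*d) + b*(wr*d + wi*c)) := by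
  rcases eq_or_lt_of_le hu with h0 | h0
  · have hw : wr = 0 ∧ wi = 0 := by constructor <;> nlinarith [sq_nonneg wr, sq_nonneg wi]
    rw [hw.1, hw.2]; nlinarith [sq_nonneg a, sq_nonneg b]
  · have key : 0 ≤ u * (u*(a^2+b^2) + v*(c^2+d^2) + 2*(a*(wr*c - wi*d) + b*(wr*d + wi*c))) := by
      nlinarith [sq_nonneg (u*a + (wr*c - wi*d)), sq_nonneg (u*b + (wr*d + wi*c)),
        mul_nonneg (sub_nonneg.2 h) (add_nonneg (sq_nonneg c) (sq_nonneg d))]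
    exact nonneg_of_mul_nonneg_right key h0

lemma psd3 (x u v : ℝ) (w : ℂ) (hx : 0 ≤ x) (hu : 0 ≤ u) (hv : 0 ≤ v)
    (h : ‖w‖ ^ 2 ≤ u * v) :
    (!![(x:ℂ),0,0;0,(u:ℂ),w;0,(starRingEnd ℂ) w,(v:ℂ)]).PosSemidef := by
  have hw : w.re^2 + w.im^2 ≤ u*v := by
    have := Complex.sq_norm w
    rw [Complex.normSq_apply] at this
    nlinarith
  refine Matrix.PosSemidef.of_dotProduct_mulVec_nonneg ?_ ?_
  · ext i j
    fin_cases i <;> fin_cases j <;>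
      simp [Matrix.conjTranspose_apply, Complex.ext_iff, Matrix.vecHead, Matrix.vecTail]
  · intro y
    rw [Complex.nonneg_iff]
    have key := quad_nonneg u v w.re w.im (y 1).re (y 1).im (y 2).re (y 2).im hu hv hw
    constructor
    · simp [dotProduct, mulVec, Fin.sum_univ_three, Complex.add_re, Complex.mul_re,
        Complex.add_im, Complex.mul_im, Matrix.vecHead, Matrix.vecTail]
      nlinarith [sq_nonneg (y 0).re, sq_nonneg (y 0).im]
    · simp [dotProduct, mulVec, Fin.sum_univ_three, Complex.add_re, Complex.mul_re,
        Complex.add_im, Complex.mul_im, Matrix.vecHead, Matrix.vecTail]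
      ring

lemma hdet_aux (d aw A1 A2 α β : ℝ) (w : ℂ) (haw : aw = ‖w‖)
    (hA10 : 0 ≤ A1) (hA20 : 0 ≤ A2)
    (hsplit : β^2*d^2 + β^2*aw^2 = (A1-A2)^2/4)
    (hαsq : α^2 = (A1+A2)^2/4) :
    ‖(β:ℂ)*w‖^2 ≤ (α+β*d)*(α-β*d) := by
  have h1 : ‖(β:ℂ)*w‖ = |β| * aw := by
    rw [norm_mul, Complex.norm_real, Real.norm_eq_abs, haw]
  rw [h1, mul_pow, _root_.sq_abs]
  nlinarith [mul_nonneg hA10 hA20, hsplit, hαsq]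

lemma hsq_aux (γ x u v α β aw : ℝ) (w : ℂ)
    (hwc : w * (starRingEnd ℂ) w = ((aw^2 : ℝ) : ℂ))
    (e1 : (α:ℝ)^2 + β^2*aw^2 = u^2 + aw^2)
    (e2 : (γ:ℝ)^2 + β^2*aw^2 = v^2 + aw^2)
    (e3 : (α:ℝ)*β + β*γ = u+v) :
    (!![((|x|:ℝ):ℂ),0,0;
        0,((α : ℝ):ℂ),((β:ℝ):ℂ)*w;
        0,(starRingEnd ℂ) (((β:ℝ):ℂ)*w),((γ : ℝ):ℂ)])
      * (!![((|x|:ℝ):ℂ),0,0;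
        0,((α : ℝ):ℂ),((β:ℝ):ℂ)*w;
        0,(starRingEnd ℂ) (((β:ℝ):ℂ)*w),((γ : ℝ):ℂ)])
    = !![(x:ℂ),0,0;0,(u:ℂ),w;0,(starRingEnd ℂ) w,(v:ℂ)]
      * !![(x:ℂ),0,0;0,(u:ℂ),w;0,(starRingEnd ℂ) w,(v:ℂ)] := by
  have e1C : ((α:ℝ):ℂ)^2 + ((β:ℝ):ℂ)^2*((aw:ℝ):ℂ)^2
      = ((u:ℝ):ℂ)^2 + ((aw:ℝ):ℂ)^2 := by exact_mod_cast congrArg Complex.ofReal e1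
  have e2C : ((γ:ℝ):ℂ)^2 + ((β:ℝ):ℂ)^2*((aw:ℝ):ℂ)^2
      = ((v:ℝ):ℂ)^2 + ((aw:ℝ):ℂ)^2 := by exact_mod_cast congrArg Complex.ofReal e2
  have e3C : ((α:ℝ):ℂ)*((β:ℝ):ℂ) + ((β:ℝ):ℂ)*((γ:ℝ):ℂ) = ((u:ℝ):ℂ) + ((v:ℝ):ℂ) := by
    exact_mod_cast congrArg Complex.ofReal e3
  push_cast at hwc
  ext i j
  fin_cases i <;> fin_cases j <;>
    simp [Matrix.mul_apply, Fin.sum_univ_three, Matrix.vecHead, Matrix.vecTail, _root_.map_mul,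
      Complex.conj_ofReal]
  · exact_mod_cast congrArg Complex.ofReal (abs_mul_abs_self x)
  · linear_combination e1C + (((β:ℝ):ℂ)^2 - 1)*hwc
  · linear_combination w*e3C
  · linear_combination ((starRingEnd ℂ) w)*e3C
  · linear_combination e2C + (((β:ℝ):ℂ)^2 - 1)*hwc

lemma traceNorm_shape (x u v : ℝ) (w : ℂ) :
    traceNorm !![(x:ℂ),0,0;0,(u:ℂ),w;0,(starRingEnd ℂ) w,(v:ℂ)] =
      |x| + |(u+v)/2 + Real.sqrt (((u-v)/2)^2 + ‖w‖^2)|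
          + |(u+v)/2 - Real.sqrt (((u-v)/2)^2 + ‖w‖^2)| := by
  set p := (u+v)/2 with hp
  set d := (u-v)/2 with hd
  set aw := ‖w‖ with haw
  set s := Real.sqrt (d^2 + aw^2) with hs
  have haw0 : 0 ≤ aw := norm_nonneg w
  have hs0 : 0 ≤ s := Real.sqrt_nonneg _
  have hs2 : s^2 = d^2 + aw^2 := Real.sq_sqrt (by positivity)
  have hwc : w * (starRingEnd ℂ) w = ((aw^2 : ℝ) : ℂ) := by
    rw [Complex.mul_conj, haw, Complex.sq_norm]
  have hu : u = p + d := by rw [hp, hd]; ring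
  have hv : v = p - d := by rw [hp, hd]; ring
  set A1 := |p + s| with hA1d
  set A2 := |p - s| with hA2d
  have hA1 : A1^2 = (p+s)^2 := sq_abs _
  have hA2 : A2^2 = (p-s)^2 := sq_abs _
  have hA10 : 0 ≤ A1 := abs_nonneg _
  have hA20 : 0 ≤ A2 := abs_nonneg _
  have hH : (!![(x:ℂ),0,0;0,(u:ℂ),w;0,(starRingEnd ℂ) w,(v:ℂ)])ᴴ
      = !![(x:ℂ),0,0;0,(u:ℂ),w;0,(starRingEnd ℂ) w,(v:ℂ)] := by
    ext i j
    fin_cases i <;> fin_cases j <;>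
      simp [Matrix.conjTranspose_apply, Complex.ext_iff, Matrix.vecHead, Matrix.vecTail]
  clear_value p d aw s A1 A2
  rcases eq_or_lt_of_le hs0 with h0 | h0
  · -- s = 0 : then aw = 0, d = 0, w = 0
    have hd0 : d = 0 ∧ aw = 0 := by constructor <;> nlinarith
    have hw0 : w = 0 := by
      rw [← norm_eq_zero, ← haw]; exact hd0.2
    have huv : u = v := by rw [hu, hv, hd0.1]; ring
    have hS : (!![((|x|:ℝ):ℂ),0,0;0,((|u|:ℝ):ℂ),0;0,(starRingEnd ℂ) (0:ℂ),((|u|:ℝ):ℂ)]).PosSemidef := by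
      refine psd3 |x| |u| |u| 0 (abs_nonneg x) (abs_nonneg u) (abs_nonneg u) ?_
      simpa using mul_self_nonneg u
    have hsq : (!![((|x|:ℝ):ℂ),0,0;0,((|u|:ℝ):ℂ),0;0,(starRingEnd ℂ) (0:ℂ),((|u|:ℝ):ℂ)]) ^ 2
        = (!![(x:ℂ),0,0;0,(u:ℂ),w;0,(starRingEnd ℂ) w,(v:ℂ)])ᴴ
          * !![(x:ℂ),0,0;0,(u:ℂ),w;0,(starRingEnd ℂ) w,(v:ℂ)] := by
      rw [hH, pow_two]
      ext i j
      fin_cases i <;> fin_cases j <;>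
        simp [Matrix.mul_apply, Fin.sum_univ_three, Matrix.vecHead, Matrix.vecTail, hw0, ← huv,
          ← Complex.ofReal_mul, pow_two, abs_mul_abs_self]
    rw [traceNorm, matSqrt_of_sq hS hsq]
    simp [Matrix.trace_fin_three, Matrix.vecHead, Matrix.vecTail, ← h0, hA1d, hA2d, huv]
    rw [show p = u from by rw [hu, hd0.1]; ring] at hA1d hA2d ⊢
    rw [huv]
  · -- s > 0
    have hsne : s ≠ 0 := ne_of_gt h0
    set β := (A1 - A2)/(2*s) with hβ
    set α := (A1 + A2)/2 with hα
    clear_value β α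
    have hαβ : α*β = p := by
      rw [hα, hβ]; field_simp; linear_combination hA1 - hA2
    have hα2 : α^2 + β^2*s^2 = p^2 + s^2 := by
      rw [hα, hβ]; field_simp
      linear_combination 2*hA1 + 2*hA2
    have hds : d^2 ≤ s^2 := by rw [hs2]; nlinarith [sq_nonneg aw]
    have hdabs : -s ≤ d ∧ d ≤ s := abs_le_of_sq_le_sq' hds hs0
    have hb1 : 0 ≤ α + β*d := by
      have he : α + β*d = (A1*(s+d) + A2*(s-d))/(2*s) := by
        rw [hα, hβ]; field_simp; ring
      rw [he]
      have h1 := mul_nonneg hA10 (by linarith [hdabs.1] : (0:ℝ) ≤ s + d)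
      have h2 := mul_nonneg hA20 (by linarith [hdabs.2] : (0:ℝ) ≤ s - d)
      apply div_nonneg (by linarith) (by linarith)
    have hb2 : 0 ≤ α - β*d := by
      have he : α - β*d = (A1*(s-d) + A2*(s+d))/(2*s) := by
        rw [hα, hβ]; field_simp; ring
      rw [he]
      have h1 := mul_nonneg hA10 (by linarith [hdabs.2] : (0:ℝ) ≤ s - d)
      have h2 := mul_nonneg hA20 (by linarith [hdabs.1] : (0:ℝ) ≤ s + d)
      apply div_nonneg (by linarith) (by linarith)
    have hβs2 : β^2*s^2 = (A1-A2)^2/4 := by rw [hβ]; field_simp; ring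
    have hsplit : β^2*d^2 + β^2*aw^2 = (A1-A2)^2/4 := by rw [← hβs2, hs2]; ring
    have hαsq : α^2 = (A1+A2)^2/4 := by rw [hα]; ring
    have hdet : ‖(β:ℂ)*w‖^2 ≤ (α+β*d)*(α-β*d) :=
      hdet_aux d aw A1 A2 α β w haw hA10 hA20 hsplit hαsq
    have hS := psd3 |x| (α+β*d) (α-β*d) ((β:ℂ)*w) (abs_nonneg x) hb1 hb2 hdet
    have e1 : (α+β*d)^2 + β^2*aw^2 = u^2 + aw^2 := by
      linear_combination hα2 + (2*d)*hαβ + (1-β^2)*hs2 - (u+p+d)*hu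
    have e2 : (α-β*d)^2 + β^2*aw^2 = v^2 + aw^2 := by
      linear_combination hα2 - (2*d)*hαβ + (1-β^2)*hs2 - (v+p-d)*hv
    have e3 : (α+β*d)*β + β*(α-β*d) = u+v := by linear_combination 2*hαβ + 2*hp
    have hsq : (!![((|x|:ℝ):ℂ),0,0;
          0,((α+β*d : ℝ):ℂ),((β:ℝ):ℂ)*w;
          0,(starRingEnd ℂ) (((β:ℝ):ℂ)*w),((α-β*d : ℝ):ℂ)]) ^ 2
        = (!![(x:ℂ),0,0;0,(u:ℂ),w;0,(starRingEnd ℂ) w,(v:ℂ)])ᴴ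
          * !![(x:ℂ),0,0;0,(u:ℂ),w;0,(starRingEnd ℂ) w,(v:ℂ)] := by
      rw [hH, pow_two]
      exact hsq_aux (α-β*d) x u v (α+β*d) β aw w hwc e1 e2 e3
    rw [traceNorm, matSqrt_of_sq hS hsq]
    simp [Matrix.trace_fin_three, Matrix.vecHead, Matrix.vecTail]
    rw [hα]; ring

lemma sum_abs_ge (q s aw : ℝ) (hsaw : aw ≤ s) : 2 * aw ≤ |q + s| + |q - s| := by
  have h1 : |(q+s) - (q-s)| ≤ |q+s| + |q-s| := abs_sub _ _
  have h2 : (q+s) - (q-s) = 2*s := by ring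
  rw [h2] at h1
  rcases le_or_gt 0 s with h | h
  · have h3 : |2*s| = 2*s := _root_.abs_of_nonneg (by linarith)
    linarith [h3 ▸ h1]
  · linarith [abs_nonneg (q+s), abs_nonneg (q-s)]

/-- For the qutrit state ρ_Z (only off-diagonal entries at (2,3) and (3,2)),
the trace-norm coherence equals 2|a₂₃|, achieved at the diagonal part. -/
theorem traceNorm_coherence_qutrit_Z (a11 a22 a33 : ℝ) (a23 : ℂ)
    (hρ : IsDensity !![(a11 : ℂ), 0, 0; 0, (a22 : ℂ), a23; 0, starRingEnd ℂ a23, (a33 : ℂ)]) :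
    IsLeast {t : ℝ | ∃ δ : Matrix (Fin 3) (Fin 3) ℂ, IsDensity δ ∧ δ.IsDiag ∧
        t = traceNorm (!![(a11 : ℂ), 0, 0; 0, (a22 : ℂ), a23;
            0, starRingEnd ℂ a23, (a33 : ℂ)] - δ)}
      (2 * ‖a23‖) ∧
    traceNorm (!![(a11 : ℂ), 0, 0; 0, (a22 : ℂ), a23; 0, starRingEnd ℂ a23, (a33 : ℂ)] -
        !![(a11 : ℂ), 0, 0; 0, (a22 : ℂ), 0; 0, 0, (a33 : ℂ)]) = 2 * ‖a23‖ := by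
  have haw0 : 0 ≤ ‖a23‖ := norm_nonneg a23
  -- diagonal entries of ρ are nonneg
  have h00 : 0 ≤ a11 := by
    have h := psd_diag_nonneg hρ.1 0
    rw [Complex.nonneg_iff] at h
    simpa using h.1
  have h11 : 0 ≤ a22 := by
    have h := psd_diag_nonneg hρ.1 1
    rw [Complex.nonneg_iff] at h
    simpa [Matrix.vecHead, Matrix.vecTail] using h.1
  have h22 : 0 ≤ a33 := by
    have h := psd_diag_nonneg hρ.1 2
    rw [Complex.nonneg_iff] at h
    simpa [Matrix.vecHead, Matrix.vecTail] using h.1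
  have htr : a11 + a22 + a33 = 1 := by
    have h := hρ.2
    rw [Matrix.trace_fin_three] at h
    simp [Matrix.vecHead, Matrix.vecTail] at h
    exact_mod_cast congrArg Complex.re h
  -- the key evaluation at the diagonal part
  have key : traceNorm (!![(a11 : ℂ), 0, 0; 0, (a22 : ℂ), a23; 0, starRingEnd ℂ a23, (a33 : ℂ)] -
        !![(a11 : ℂ), 0, 0; 0, (a22 : ℂ), 0; 0, 0, (a33 : ℂ)]) = 2 * ‖a23‖ := by
    have hdm : !![(a11 : ℂ), 0, 0; 0, (a22 : ℂ), a23; 0, starRingEnd ℂ a23, (a33 : ℂ)] -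
        !![(a11 : ℂ), 0, 0; 0, (a22 : ℂ), 0; 0, 0, (a33 : ℂ)]
        = !![(((0:ℝ)) : ℂ), 0, 0; 0, (((0:ℝ)) : ℂ), a23;
            0, starRingEnd ℂ a23, (((0:ℝ)) : ℂ)] := by
      ext i j
      fin_cases i <;> fin_cases j <;>
        simp [Matrix.sub_apply, Matrix.vecHead, Matrix.vecTail]
    rw [hdm, traceNorm_shape]
    have h1 : (((0:ℝ)-0)/2)^2 + ‖a23‖^2 = ‖a23‖^2 := by norm_num
    rw [h1, Real.sqrt_sq haw0]
    rw [_root_.abs_of_nonneg (by norm_num <;> linarith : (0:ℝ) ≤ ((0:ℝ)+0)/2 + ‖a23‖)]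
    rw [show ((0:ℝ)+0)/2 - ‖a23‖ = -‖a23‖ by ring, abs_neg,
      _root_.abs_of_nonneg haw0]
    norm_num
    ring
  refine ⟨⟨⟨!![(a11 : ℂ), 0, 0; 0, (a22 : ℂ), 0; 0, 0, (a33 : ℂ)], ⟨?_, ?_⟩, ?_, key.symm⟩, ?_⟩, key⟩
  · -- PSD of diagonal part
    have h := psd3 a11 a22 a33 0 h00 h11 h22 (by simpa using mul_nonneg h11 h22)
    convert h using 2 <;> simp
  · rw [Matrix.trace_fin_three]
    simp [Matrix.vecHead, Matrix.vecTail]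
    exact_mod_cast congrArg (Complex.ofReal) htr
  · intro i j hne
    fin_cases i <;> fin_cases j <;> simp_all [Matrix.vecHead, Matrix.vecTail]
  · -- lower bound
    rintro t ⟨δ, hδ, hdiag, rfl⟩
    have hdi : ∀ i, δ i i = ((δ i i).re : ℂ) := by
      intro i
      have h := psd_diag_nonneg hδ.1 i
      rw [Complex.nonneg_iff] at h
      exact (Complex.ext (by simp) (by simp [← h.2])).symm
    have hdiff : !![(a11 : ℂ), 0, 0; 0, (a22 : ℂ), a23; 0, starRingEnd ℂ a23, (a33 : ℂ)] - δ
        = !![((a11 - (δ 0 0).re : ℝ) : ℂ), 0, 0;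
             0, ((a22 - (δ 1 1).re : ℝ) : ℂ), a23;
             0, starRingEnd ℂ a23, ((a33 - (δ 2 2).re : ℝ) : ℂ)] := by
      ext i j
      fin_cases i <;> fin_cases j <;>
        simp [Matrix.sub_apply, Matrix.vecHead, Matrix.vecTail,
          hdiag (by decide : (0:Fin 3) ≠ 1), hdiag (by decide : (0:Fin 3) ≠ 2),
          hdiag (by decide : (1:Fin 3) ≠ 0), hdiag (by decide : (1:Fin 3) ≠ 2),
          hdiag (by decide : (2:Fin 3) ≠ 0), hdiag (by decide : (2:Fin 3) ≠ 1)] <;>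
        (rw [hdi]; simp)
    rw [hdiff, traceNorm_shape]
    set u := a22 - (δ 1 1).re
    set v := a33 - (δ 2 2).re
    set s := Real.sqrt (((u-v)/2)^2 + ‖a23‖^2) with hs
    have hsaw : ‖a23‖ ≤ s := by
      rw [hs]
      calc ‖a23‖ = Real.sqrt (‖a23‖^2) := (Real.sqrt_sq haw0).symm
        _ ≤ _ := Real.sqrt_le_sqrt (by nlinarith [sq_nonneg ((u-v)/2)])
    have hge := sum_abs_ge ((u+v)/2) s ‖a23‖ hsaw
    have habs : (0:ℝ) ≤ |a11 - (δ 0 0).re| := abs_nonneg _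
    calc 2 * ‖a23‖ ≤ |(u+v)/2 + s| + |(u+v)/2 - s| := hge
      _ ≤ |a11 - (δ 0 0).re| + |(u+v)/2 + s| + |(u+v)/2 - s| := by linarith
end
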